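/- Let g : ℝ^d → ℝ be a convex function, let X ⊆ ℝ^d be a compact convex set, and let ε > 0. Then there exists a max-affine function h : ℝ^d → ℝ such that the Lebesgue measure of the set {x ∈ X : sign classifications disagree}, i.e., of {x ∈ X : (h(x) > 0) ↮ (g(x) > 0)}, is less than ε. -/

import Mathlib

open MeasureTheory

/-- A *max-affine* function on ℝ^d: `h x = max_{i ∈ I} (⟪aᵢ, x⟫ + bᵢ)` for a nonempty finite
index set; such functions are exactly those realized by input-convex ReLU neural networks. -/
def MaxAffine {d : ℕ} (h : EuclideanSpace ℝ (Fin d) → ℝ) : Prop :=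
  ∃ (n : ℕ) (a : Fin (n + 1) → EuclideanSpace ℝ (Fin d)) (b : Fin (n + 1) → ℝ),
    ∀ x, h x = Finset.univ.sup' Finset.univ_nonempty
      (fun i : Fin (n + 1) => (inner ℝ (a i) x : ℝ) + b i)

/-!
A convex function is the supremum of its affine minorants, and by compactness finitely many of
them already give a max-affine `h ≤ g` with `g - δ < h` on `X`. The signs of `h` and `g` can then
differ on `X` only where `0 < g ≤ δ`, and the measure of that part of `X` tends to `0` with `δ`.
-/

open Set Filter Topology

lemma Finset.exists_image_univ_fin_succ_eq {α : Type*} [DecidableEq α] {t : Finset α}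
    (ht : t.Nonempty) : ∃ (n : ℕ) (f : Fin (n + 1) → α), univ.image f = t := by
  obtain ⟨n, hn⟩ := Nat.exists_eq_add_one_of_ne_zero (card_ne_zero.2 ht)
  refine ⟨n, fun i => t.equivFin.symm (Fin.cast hn.symm i), ?_⟩
  ext p
  simp only [mem_image, mem_univ, true_and]
  exact ⟨fun ⟨i, hi⟩ => hi ▸ Subtype.prop _,
    fun hp => ⟨Fin.cast hn (t.equivFin ⟨p, hp⟩), by simp⟩⟩

lemma maxAffine_finset_sup' {d : ℕ} (t : Finset (EuclideanSpace ℝ (Fin d) × ℝ))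
    (ht : t.Nonempty) : MaxAffine fun x => t.sup' ht fun p => inner ℝ p.1 x + p.2 := by
  classical
  obtain ⟨n, f, rfl⟩ := Finset.exists_image_univ_fin_succ_eq ht
  exact ⟨n, fun i => (f i).1, fun i => (f i).2, fun x => Finset.sup'_image _ _⟩

lemma MeasureTheory.exists_pos_measure_inter_preimage_Ioc_lt {α : Type*} [MeasurableSpace α]
    {μ : Measure α} {s : Set α} (hs : NullMeasurableSet s μ) (hμs : μ s ≠ ⊤) {f : α → ℝ}
    (hf : AEMeasurable f μ) {ε : ENNReal} (hε : 0 < ε) :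
    ∃ δ > 0, μ (s ∩ f ⁻¹' Ioc 0 δ) < ε := by
  have hempty : ⋂ δ > (0 : ℝ), s ∩ f ⁻¹' Ioc 0 δ = ∅ := by
    refine eq_empty_of_forall_notMem fun x hx => ?_
    simp only [mem_iInter, mem_inter_iff, mem_preimage, mem_Ioc] at hx
    have hfx := (hx 1 one_pos).2.1
    linarith [(hx (f x / 2) (half_pos hfx)).2.2]
  have hlim : Tendsto (fun δ => μ (s ∩ f ⁻¹' Ioc 0 δ)) (𝓝[>] 0) (𝓝 0) := by
    have := tendsto_measure_biInter_gt (μ := μ) (s := fun δ => s ∩ f ⁻¹' Ioc 0 δ) (a := 0)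
      (fun δ _ => hs.inter (hf.nullMeasurableSet_preimage measurableSet_Ioc))
      (fun _ _ _ hij => inter_subset_inter_right _ (preimage_mono (Ioc_subset_Ioc_right hij)))
      ⟨1, one_pos, ne_top_of_le_ne_top hμs (measure_mono inter_subset_left)⟩
    rwa [hempty, measure_empty] at this
  exact ((hlim.eventually (gt_mem_nhds hε)).and self_mem_nhdsWithin).exists.imp
    fun δ h => ⟨h.2, h.1⟩

section InnerProductSpace

variable {F : Type*} [NormedAddCommGroup F] [InnerProductSpace ℝ F] [CompleteSpace F]
  {g : F → ℝ}

lemma ConvexOn.exists_inner_add_le_of_lt (hg : ConvexOn ℝ univ g) (hgc : LowerSemicontinuous g)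
    {y : F} {a : ℝ} (ha : a < g y) :
    ∃ p : F × ℝ, (∀ x, inner ℝ p.1 x + p.2 ≤ g x) ∧ inner ℝ p.1 y + p.2 = a := by
  obtain ⟨l, c, hle, hy⟩ := hg.exists_affine_le_of_lt (𝕜 := ℝ) (mem_univ y) ha isClosed_univ
    (lowerSemicontinuousOn_univ_iff.2 hgc)
  refine ⟨((InnerProductSpace.toDual ℝ F).symm l, c), fun x => ?_, ?_⟩
  · simpa using hle ⟨x, mem_univ x⟩
  · simpa using hy

lemma ConvexOn.exists_finset_sup'_inner_add_approx (hg : ConvexOn ℝ univ g) (hgc : Continuous g)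
    {K : Set F} (hK : IsCompact K) {δ : ℝ} (hδ : 0 < δ) :
    ∃ (t : Finset (F × ℝ)) (ht : t.Nonempty),
      (∀ x, t.sup' ht (fun p => inner ℝ p.1 x + p.2) ≤ g x) ∧
      ∀ x ∈ K, g x - δ < t.sup' ht (fun p => inner ℝ p.1 x + p.2) := by
  classical
  choose P hPle hPy using fun y : F =>
    hg.exists_inner_add_le_of_lt hgc.lowerSemicontinuous (sub_lt_self (g y) (half_pos hδ))
  set U : F → Set F := fun y => {x | g x - δ < inner ℝ (P y).1 x + (P y).2}
  have hU : ∀ y ∈ K, U y ∈ 𝓝 y := fun y _ =>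
    (isOpen_lt (by fun_prop) (by fun_prop)).mem_nhds (show g y - δ < _ by rw [hPy]; linarith)
  obtain ⟨s, -, hcover⟩ := hK.elim_nhds_subcover U hU
  -- `0` is inserted only so that the finset is nonempty when `K = ∅`.
  refine ⟨(insert 0 s).image P, (Finset.insert_nonempty _ _).image P,
    fun x => ?_, fun x hx => ?_⟩
  · exact Finset.sup'_le _ _ fun p hp => by
      obtain ⟨y, -, rfl⟩ := Finset.mem_image.1 hp
      exact hPle y x
  · obtain ⟨y, hy, hxy⟩ := mem_iUnion₂.1 (hcover hx)
    exact hxy.trans_le (Finset.le_sup' (fun p => inner ℝ p.1 x + p.2)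
      (Finset.mem_image_of_mem P (Finset.mem_insert_of_mem hy)))

end InnerProductSpace

theorem maxAffine_classification_universal_approximation_general {d : ℕ}
    (g : EuclideanSpace ℝ (Fin d) → ℝ) (hg : ConvexOn ℝ Set.univ g)
    (X : Set (EuclideanSpace ℝ (Fin d))) (hX : IsCompact X)
    (ε : ℝ) (hε : 0 < ε) :
    ∃ h : EuclideanSpace ℝ (Fin d) → ℝ, MaxAffine h ∧
      volume {x ∈ X | ¬((0 < h x) ↔ (0 < g x))} < ENNReal.ofReal ε := by
  have hgc : Continuous g := continuousOn_univ.1 (hg.continuousOn isOpen_univ)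
  obtain ⟨δ, hδ, hsmall⟩ := exists_pos_measure_inter_preimage_Ioc_lt (μ := volume)
    hX.isClosed.measurableSet.nullMeasurableSet hX.measure_lt_top.ne hgc.aemeasurable
    (ENNReal.ofReal_pos.2 hε)
  obtain ⟨t, ht, hle, hgt⟩ := hg.exists_finset_sup'_inner_add_approx hgc hX hδ
  refine ⟨_, maxAffine_finset_sup' t ht, (measure_mono ?_).trans_lt hsmall⟩
  rintro x ⟨hxX, hdis⟩
  have hgx : 0 < g x := by
    by_contra hgx
    exact hdis ⟨fun hhx => absurd (hhx.trans_le (hle x)) hgx, fun hgx' => absurd hgx' hgx⟩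
  have hhx : ¬0 < t.sup' ht (fun p => inner ℝ p.1 x + p.2) :=
    fun hhx => hdis (iff_of_true hhx hgx)
  exact ⟨hxX, hgx, by linarith [hgt x hxX]⟩

/-- **Theorem 2 of the paper** (universal approximation in the classification sense):
for any convex `g : ℝ^d → ℝ`, compact convex `X ⊆ ℝ^d`, and `ε > 0`, there is a max-affine
function `h` whose sign classification disagrees with that of `g` on a subset of `X` of
Lebesgue measure less than `ε`. -/
theorem maxAffine_classification_universal_approximation {d : ℕ}
    (g : EuclideanSpace ℝ (Fin d) → ℝ) (hg : ConvexOn ℝ Set.univ g)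
    (X : Set (EuclideanSpace ℝ (Fin d))) (hX : IsCompact X) (hXconv : Convex ℝ X)
    (ε : ℝ) (hε : 0 < ε) :
    ∃ h : EuclideanSpace ℝ (Fin d) → ℝ, MaxAffine h ∧
      volume {x ∈ X | ¬((0 < h x) ↔ (0 < g x))} < ENNReal.ofReal ε :=
  maxAffine_classification_universal_approximation_general g hg X hX ε hε
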